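/- Let 0 < min(p_-, q_-) ≤ p_n, q_n ≤ ∞ and suppose the embedding id: ℓ_{q_n} → ℓ_{p_n} is compact (with respect to the metric topologies). Then the Bernstein numbers satisfy b_n(id) → 0. -/

import Mathlib

open scoped ENNReal

/-- The modular of the variable Lebesgue sequence space with exponents in `(0,∞]`. -/
noncomputable def vmod (p : ℕ → ℝ≥0∞) (a : ℕ → ℝ) : ℝ≥0∞ :=
  (∑' n, if p n ≠ ⊤ then ENNReal.ofReal (|a n| ^ (p n).toReal) else 0)
    + ⨆ n ∈ {n | p n = ⊤}, ENNReal.ofReal |a n|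

/-- Luxemburg quasi-norm of `ℓ_{p_n}`, value `∞` when no admissible `λ` exists. -/
noncomputable def vNormE (p : ℕ → ℝ≥0∞) (a : ℕ → ℝ) : ℝ≥0∞ :=
  sInf {l : ℝ≥0∞ | 0 < l ∧ l ≠ ⊤ ∧ vmod p (fun n => a n / l.toReal) ≤ 1}

lemma vmod_congr {r : ℕ → ℝ≥0∞} {a b : ℕ → ℝ} (h : ∀ n, |a n| = |b n|) :
    vmod r a = vmod r b := by
  unfold vmod
  congr 1
  · exact tsum_congr fun n => by rw [h n]
  · exact iSup_congr fun n => iSup_congr fun _ => by rw [h n]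

lemma vNormE_congr {r : ℕ → ℝ≥0∞} {a b : ℕ → ℝ} (h : ∀ n, |a n| = |b n|) :
    vNormE r a = vNormE r b := by
  unfold vNormE
  congr 1
  ext l
  have : ∀ L : ℝ, vmod r (fun n => a n / L) = vmod r (fun n => b n / L) := fun L =>
    vmod_congr fun n => by rw [abs_div, abs_div, h n]
  simp [this]

lemma vmod_anti {r : ℕ → ℝ≥0∞} {a : ℕ → ℝ} {l l' : ℝ} (h0 : 0 < l') (h : l' ≤ l) :
    vmod r (fun n => a n / l) ≤ vmod r (fun n => a n / l') := by
  have hl0 : 0 < l := lt_of_lt_of_le h0 h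
  have key : ∀ n, |a n / l| ≤ |a n / l'| := by
    intro n
    rw [abs_div, abs_div, abs_of_pos hl0, abs_of_pos h0]
    exact div_le_div_of_nonneg_left (abs_nonneg _) h0 h
  unfold vmod
  refine add_le_add (ENNReal.tsum_le_tsum fun n => ?_)
    (iSup_mono fun n => iSup_mono fun _ => ?_)
  · split
    · exact ENNReal.ofReal_le_ofReal <|
        Real.rpow_le_rpow (abs_nonneg _) (key n) ENNReal.toReal_nonneg
    · exact le_rfl
  · exact ENNReal.ofReal_le_ofReal (key n)

lemma vNormE_le_of_mod {r : ℕ → ℝ≥0∞} {a : ℕ → ℝ} {l : ℝ} (hl : 0 < l)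
    (h : vmod r (fun n => a n / l) ≤ 1) : vNormE r a ≤ ENNReal.ofReal l := by
  apply sInf_le
  refine ⟨ENNReal.ofReal_pos.2 hl, ENNReal.ofReal_ne_top, ?_⟩
  rwa [ENNReal.toReal_ofReal hl.le]

lemma mod_le_of_vNormE_lt {r : ℕ → ℝ≥0∞} {a : ℕ → ℝ} {l : ℝ} (hl : 0 < l)
    (h : vNormE r a < ENNReal.ofReal l) : vmod r (fun n => a n / l) ≤ 1 := by
  obtain ⟨s, hs, hslt⟩ := sInf_lt_iff.mp h
  obtain ⟨hs0, hst, hsmod⟩ := hs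
  have h1 : 0 < s.toReal := ENNReal.toReal_pos hs0.ne' hst
  have h2 : s.toReal ≤ l := by
    have := ENNReal.toReal_mono ENNReal.ofReal_ne_top hslt.le
    rwa [ENNReal.toReal_ofReal hl.le] at this
  exact le_trans (vmod_anti h1 h2) hsmod

lemma ennreal_le_mul_of_forall_lt {c M X : ℝ≥0∞} (hc0 : c ≠ 0) (hct : c ≠ ⊤)
    (h : ∀ b, M < b → X ≤ c * b) : X ≤ c * M := by
  have h2 : ∀ b, M < b → c⁻¹ * X ≤ b := by
    intro b hb
    rw [← one_mul b, ← ENNReal.inv_mul_cancel hc0 hct, mul_assoc]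
    exact mul_le_mul_right (h b hb) _
  have h3 : c⁻¹ * X ≤ M := le_of_forall_gt_imp_ge_of_dense h2
  calc X = c * (c⁻¹ * X) := by rw [← mul_assoc, ENNReal.mul_inv_cancel hc0 hct, one_mul]
  _ ≤ c * M := mul_le_mul_right h3 _

section CoordBound

variable {r : ℕ → ℝ≥0∞} {m : ℝ}

lemma coord_le_vNormE (hm0 : 0 < m) (hm : ∀ n, ENNReal.ofReal m ≤ r n)
    (a : ℕ → ℝ) (n0 : ℕ) : ENNReal.ofReal |a n0| ≤ vNormE r a := by
  apply le_sInf
  rintro l ⟨hl0, hlt, hmod⟩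
  set L := l.toReal with hL
  have hL0 : 0 < L := ENNReal.toReal_pos hl0.ne' hlt
  have key : |a n0| / L ≤ 1 := by
    by_cases htop : r n0 = ⊤
    · have h1 : ENNReal.ofReal |a n0 / L| ≤ vmod r (fun n => a n / L) := by
        refine le_trans ?_ le_add_self
        exact le_iSup₂ (f := fun n (_ : n ∈ {n | r n = ⊤}) =>
          ENNReal.ofReal |(fun k => a k / L) n|) n0 htop
      have h2 : ENNReal.ofReal |a n0 / L| ≤ 1 := le_trans h1 hmod
      rw [ENNReal.ofReal_le_one, abs_div, abs_of_pos hL0] at h2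
      exact h2
    · set s := (r n0).toReal with hs
      have hs0 : 0 < s := by
        have : m ≤ s := by
          have := ENNReal.toReal_mono htop (hm n0)
          rwa [ENNReal.toReal_ofReal hm0.le] at this
        linarith
      have h1 : ENNReal.ofReal (|a n0 / L| ^ s) ≤ vmod r (fun n => a n / L) := by
        refine le_trans ?_ le_self_add
        have := ENNReal.le_tsum (f := fun n =>
          if r n ≠ ⊤ then ENNReal.ofReal (|(fun k => a k / L) n| ^ (r n).toReal) else 0) n0
        simpa [htop] using this
      have h2 : ENNReal.ofReal (|a n0 / L| ^ s) ≤ 1 := le_trans h1 hmod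
      by_contra hc
      push_neg at hc
      rw [abs_div, abs_of_pos hL0] at h2
      have : 1 < (|a n0| / L) ^ s :=
        (Real.one_lt_rpow_iff_of_pos (by positivity)).2 (Or.inl ⟨hc, hs0⟩)
      rw [ENNReal.ofReal_le_one] at h2
      linarith
  rw [div_le_one hL0] at key
  calc ENNReal.ofReal |a n0| ≤ ENNReal.ofReal L := ENNReal.ofReal_le_ofReal key
  _ = l := ENNReal.ofReal_toReal hlt

lemma vNormE_pos (hm0 : 0 < m) (hm : ∀ n, ENNReal.ofReal m ≤ r n)
    {a : ℕ → ℝ} (ha : a ≠ 0) : 0 < vNormE r a := by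
  obtain ⟨n0, hn0⟩ := Function.ne_iff.1 ha
  calc (0:ℝ≥0∞) < ENNReal.ofReal |a n0| := by
        simpa using ENNReal.ofReal_pos.2 (abs_pos.2 hn0)
  _ ≤ vNormE r a := coord_le_vNormE hm0 hm a n0

end CoordBound

lemma vNormE_smul_le {r : ℕ → ℝ≥0∞} (a : ℕ → ℝ) {c : ℝ} (hc : c ≠ 0) :
    vNormE r (fun n => c * a n) ≤ ENNReal.ofReal |c| * vNormE r a := by
  have hc0 : ENNReal.ofReal |c| ≠ 0 := (ENNReal.ofReal_pos.2 (abs_pos.2 hc)).ne'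
  apply ennreal_le_mul_of_forall_lt hc0 ENNReal.ofReal_ne_top
  intro b hb
  rcases eq_or_ne b ⊤ with rfl | hbt
  · rw [ENNReal.mul_top hc0]; exact le_top
  obtain ⟨l, ⟨hl0, hlt, hmod⟩, hlb⟩ := sInf_lt_iff.mp hb
  have hmem : ENNReal.ofReal |c| * l ∈
      {l : ℝ≥0∞ | 0 < l ∧ l ≠ ⊤ ∧ vmod r (fun n => c * a n / l.toReal) ≤ 1} := by
    refine ⟨ENNReal.mul_pos hc0 hl0.ne', ENNReal.mul_ne_top ENNReal.ofReal_ne_top hlt, ?_⟩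
    have htr : (ENNReal.ofReal |c| * l).toReal = |c| * l.toReal := by
      rw [ENNReal.toReal_mul, ENNReal.toReal_ofReal (abs_nonneg _)]
    rw [htr]
    have : vmod r (fun n => c * a n / (|c| * l.toReal)) =
        vmod r (fun n => a n / l.toReal) := by
      apply vmod_congr
      intro n
      rw [abs_div, abs_div, abs_mul, abs_mul, abs_abs,
        mul_div_mul_left _ _ (by simpa using hc : |c| ≠ 0)]
    rw [this]
    exact hmod
  calc vNormE r (fun n => c * a n) ≤ ENNReal.ofReal |c| * l := sInf_le hmem
  _ ≤ ENNReal.ofReal |c| * b := mul_le_mul_right hlb.le _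

lemma exists_unit_scale {r : ℕ → ℝ≥0∞} {m : ℝ} (hm0 : 0 < m)
    (hm : ∀ n, ENNReal.ofReal m ≤ r n) {a : ℕ → ℝ} (ha : a ≠ 0)
    (hat : vNormE r a ≠ ⊤) :
    ∃ c : ℝ, 0 < c ∧ vNormE r (fun n => c * a n) = 1 ∧
      ENNReal.ofReal c * vNormE r a = 1 := by
  set R := vNormE r a with hR
  have hR0 : 0 < R := vNormE_pos hm0 hm ha
  have hRt : 0 < R.toReal := ENNReal.toReal_pos hR0.ne' hat
  have key1 : ENNReal.ofReal R.toReal⁻¹ * R = 1 := by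
    rw [ENNReal.ofReal_inv_of_pos hRt, ENNReal.ofReal_toReal hat]
    exact ENNReal.inv_mul_cancel hR0.ne' hat
  refine ⟨R.toReal⁻¹, by positivity, ?_, key1⟩
  have hup : vNormE r (fun n => R.toReal⁻¹ * a n) ≤ 1 := by
    calc vNormE r (fun n => R.toReal⁻¹ * a n)
        ≤ ENNReal.ofReal |R.toReal⁻¹| * R := vNormE_smul_le a (by positivity)
    _ = 1 := by rw [abs_of_pos (by positivity)]; exact key1
  have hlow : (1:ℝ≥0∞) ≤ vNormE r (fun n => R.toReal⁻¹ * a n) := by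
    by_contra hcon
    push_neg at hcon
    have h1 : R ≤ R * vNormE r (fun n => R.toReal⁻¹ * a n) := by
      have heq : a = fun n => R.toReal * (R.toReal⁻¹ * a n) := by
        funext n; field_simp
      calc R = vNormE r (fun n => R.toReal * (R.toReal⁻¹ * a n)) := by
            rw [hR]; exact congrArg (vNormE r) heq
      _ ≤ ENNReal.ofReal |R.toReal| * vNormE r (fun n => R.toReal⁻¹ * a n) :=
          vNormE_smul_le _ hRt.ne'
      _ = R * vNormE r (fun n => R.toReal⁻¹ * a n) := by
          rw [abs_of_pos hRt, ENNReal.ofReal_toReal hat]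
    have h2 : R * vNormE r (fun n => R.toReal⁻¹ * a n) < R * 1 :=
      (ENNReal.mul_lt_mul_iff_right hR0.ne' hat).2 hcon
    rw [mul_one] at h2
    exact absurd (lt_of_le_of_lt h1 h2) (lt_irrefl _)
  exact le_antisymm hup hlow

section QuasiTriangle

variable {p : ℕ → ℝ≥0∞} {m : ℝ}

lemma main_pointwise {t : ℝ} (ht0 : 0 < t) (ht1 : t ≤ 1) {s : ℝ} (hts : t ≤ s)
    {X Y : ℝ} (hX : 0 ≤ X) (hY : 0 ≤ Y) :
    ENNReal.ofReal (((X + Y) / (2:ℝ) ^ (1/t)) ^ s) ≤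
      (ENNReal.ofReal (X ^ s) + ENNReal.ofReal (Y ^ s)) * 2⁻¹ := by
  set c2 : ℝ := (2:ℝ) ^ (1/t) with hc2def
  have hc2 : 0 < c2 := Real.rpow_pos_of_pos two_pos _
  have hs0 : 0 < s := lt_of_lt_of_le ht0 hts
  have hofc2 : ENNReal.ofReal c2 = (2:ℝ≥0∞) ^ (1/t) := by
    rw [hc2def, ← ENNReal.ofReal_rpow_of_pos two_pos]
    norm_num
  have hk : ENNReal.ofReal c2⁻¹ = (2:ℝ≥0∞) ^ (-(1/t)) := by
    rw [ENNReal.ofReal_inv_of_pos hc2, hofc2, ENNReal.rpow_neg]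
  set A := ENNReal.ofReal X with hA
  set B := ENNReal.ofReal Y with hB
  have hXs : ENNReal.ofReal (X ^ s) = A ^ s := (ENNReal.ofReal_rpow_of_nonneg hX hs0.le).symm
  have hYs : ENNReal.ofReal (Y ^ s) = B ^ s := (ENNReal.ofReal_rpow_of_nonneg hY hs0.le).symm
  have hLHS : ENNReal.ofReal (((X + Y) / c2) ^ s) =
      (A + B) ^ s * ((2:ℝ≥0∞) ^ (-(1/t))) ^ s := by
    rw [← ENNReal.ofReal_rpow_of_nonneg (by positivity) hs0.le, div_eq_mul_inv,
      ENNReal.ofReal_mul (by positivity), ENNReal.ofReal_add hX hY, hk,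
      ENNReal.mul_rpow_of_nonneg _ _ hs0.le]
  have hkpow : ((2:ℝ≥0∞) ^ (-(1/t))) ^ s = (2:ℝ≥0∞) ^ (-(s/t)) := by
    rw [← ENNReal.rpow_mul]
    congr 1
    ring
  have hst1 : (1:ℝ) ≤ s / t := (one_le_div ht0).2 hts
  rw [hLHS, hXs, hYs, hkpow]
  rcases le_or_gt s 1 with hs1 | hs1
  · have h1 : (A + B) ^ s ≤ A ^ s + B ^ s := ENNReal.rpow_add_le_add_rpow A B hs0.le hs1
    have h2 : (2:ℝ≥0∞) ^ (-(s/t)) ≤ 2⁻¹ := by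
      rw [← ENNReal.rpow_neg_one]
      exact ENNReal.rpow_le_rpow_of_exponent_le one_le_two (by linarith)
    exact mul_le_mul' h1 h2
  · have h1 : (A + B) ^ s ≤ (2:ℝ≥0∞) ^ (s - 1) * (A ^ s + B ^ s) :=
      ENNReal.rpow_add_le_mul_rpow_add_rpow A B hs1.le
    calc (A + B) ^ s * (2:ℝ≥0∞) ^ (-(s/t))
        ≤ (2:ℝ≥0∞) ^ (s - 1) * (A ^ s + B ^ s) * (2:ℝ≥0∞) ^ (-(s/t)) :=
          mul_le_mul_left h1 _
    _ = (A ^ s + B ^ s) * ((2:ℝ≥0∞) ^ (s - 1) * (2:ℝ≥0∞) ^ (-(s/t))) := by ring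
    _ ≤ (A ^ s + B ^ s) * 2⁻¹ := by
        apply mul_le_mul_right
        rw [← ENNReal.rpow_add _ _ two_ne_zero ENNReal.ofNat_ne_top, ← ENNReal.rpow_neg_one]
        apply ENNReal.rpow_le_rpow_of_exponent_le one_le_two
        have : s ≤ s / t := by
          rw [div_eq_mul_inv]
          nlinarith [inv_anti₀ ht0 ht1, le_of_lt hs0]
        linarith

lemma qtri (hm0 : 0 < m) (hmp : ∀ n, ENNReal.ofReal m ≤ p n) (u v : ℕ → ℝ) {l : ℝ}
    (hl : 0 < l) (hu : vmod p (fun n => u n / l) ≤ 1) (hv : vmod p (fun n => v n / l) ≤ 1) :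
    vmod p (fun n => (u n + v n) / ((2:ℝ) ^ (1/min m 1) * l)) ≤ 1 := by
  set t : ℝ := min m 1 with htdef
  have ht0 : 0 < t := lt_min hm0 one_pos
  have ht1 : t ≤ 1 := min_le_right _ _
  set c2 : ℝ := (2:ℝ) ^ (1/t) with hc2def
  have hc2 : 0 < c2 := Real.rpow_pos_of_pos two_pos _
  have hD : 0 < c2 * l := by positivity
  have hk : ENNReal.ofReal c2⁻¹ ≤ 2⁻¹ := by
    have h1 : ENNReal.ofReal c2⁻¹ = (2:ℝ≥0∞) ^ (-(1/t)) := by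
      rw [ENNReal.ofReal_inv_of_pos hc2, hc2def, ← ENNReal.ofReal_rpow_of_pos two_pos,
        ENNReal.rpow_neg]
      norm_num
    rw [h1, ← ENNReal.rpow_neg_one]
    apply ENNReal.rpow_le_rpow_of_exponent_le one_le_two
    have : (1:ℝ) ≤ 1/t := (one_le_div ht0).2 ht1
    linarith
  -- pointwise reduction of the argument
  have habs : ∀ w1 w2 : ℝ, |(w1 + w2) / (c2 * l)| ≤ (|w1 / l| + |w2 / l|) / c2 := by
    intro w1 w2
    have h1 : |(w1 + w2) / (c2 * l)| = |w1 + w2| / (c2 * l) := by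
      rw [abs_div, abs_of_pos hD]
    have h2 : |w1 / l| = |w1| / l := by rw [abs_div, abs_of_pos hl]
    have h3 : |w2 / l| = |w2| / l := by rw [abs_div, abs_of_pos hl]
    have h4 : (|w1| / l + |w2| / l) / c2 = (|w1| + |w2|) / (c2 * l) := by
      rw [← add_div, div_div, mul_comm l c2]
    rw [h1, h2, h3, h4]
    gcongr
    exact abs_add_le _ _
  -- sum part
  have hsum : (∑' n, if p n ≠ ⊤ then
        ENNReal.ofReal (|(u n + v n) / (c2 * l)| ^ (p n).toReal) else 0)
      ≤ ((∑' n, if p n ≠ ⊤ then ENNReal.ofReal (|u n / l| ^ (p n).toReal) else 0) +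
         (∑' n, if p n ≠ ⊤ then ENNReal.ofReal (|v n / l| ^ (p n).toReal) else 0)) * 2⁻¹ := by
    rw [← ENNReal.tsum_add, ← ENNReal.tsum_mul_right]
    refine ENNReal.tsum_le_tsum fun n => ?_
    by_cases hn : p n = ⊤
    · simp [hn]
    · simp only [hn, ne_eq, not_false_eq_true, if_true]
      set s := (p n).toReal with hsdef
      have hts : t ≤ s := by
        have : m ≤ s := by
          have := ENNReal.toReal_mono hn (hmp n)
          rwa [ENNReal.toReal_ofReal hm0.le] at this
        exact le_trans (min_le_left _ _) this
      have hstep : ENNReal.ofReal (|(u n + v n) / (c2 * l)| ^ s) ≤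
          ENNReal.ofReal (((|u n / l| + |v n / l|) / c2) ^ s) := by
        apply ENNReal.ofReal_le_ofReal
        apply Real.rpow_le_rpow (abs_nonneg _) (habs (u n) (v n)) (by positivity)
      refine le_trans hstep ?_
      exact main_pointwise ht0 ht1 hts (abs_nonneg _) (abs_nonneg _)
  -- sup part
  have hsup : (⨆ n ∈ {n | p n = ⊤}, ENNReal.ofReal |(u n + v n) / (c2 * l)|)
      ≤ ((⨆ n ∈ {n | p n = ⊤}, ENNReal.ofReal |u n / l|) +
         (⨆ n ∈ {n | p n = ⊤}, ENNReal.ofReal |v n / l|)) * 2⁻¹ := by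
    refine iSup₂_le fun n hn => ?_
    have h1 : ENNReal.ofReal |(u n + v n) / (c2 * l)| ≤
        (ENNReal.ofReal |u n / l| + ENNReal.ofReal |v n / l|) * 2⁻¹ := by
      calc ENNReal.ofReal |(u n + v n) / (c2 * l)|
          ≤ ENNReal.ofReal ((|u n / l| + |v n / l|) * c2⁻¹) := by
            apply ENNReal.ofReal_le_ofReal
            rw [← div_eq_mul_inv]
            exact habs (u n) (v n)
      _ = ENNReal.ofReal (|u n / l| + |v n / l|) * ENNReal.ofReal c2⁻¹ :=
            ENNReal.ofReal_mul (by positivity)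
      _ ≤ (ENNReal.ofReal |u n / l| + ENNReal.ofReal |v n / l|) * 2⁻¹ := by
            rw [ENNReal.ofReal_add (abs_nonneg _) (abs_nonneg _)]
            exact mul_le_mul_right hk _
    refine le_trans h1 ?_
    apply mul_le_mul_left
    exact add_le_add (le_iSup₂ (f := fun n (_ : n ∈ {n | p n = ⊤}) =>
        ENNReal.ofReal |u n / l|) n hn)
      (le_iSup₂ (f := fun n (_ : n ∈ {n | p n = ⊤}) => ENNReal.ofReal |v n / l|) n hn)
  calc vmod p (fun n => (u n + v n) / (c2 * l))
      ≤ ((∑' n, if p n ≠ ⊤ then ENNReal.ofReal (|u n / l| ^ (p n).toReal) else 0) +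
         (∑' n, if p n ≠ ⊤ then ENNReal.ofReal (|v n / l| ^ (p n).toReal) else 0)) * 2⁻¹ +
        ((⨆ n ∈ {n | p n = ⊤}, ENNReal.ofReal |u n / l|) +
         (⨆ n ∈ {n | p n = ⊤}, ENNReal.ofReal |v n / l|)) * 2⁻¹ :=
        add_le_add hsum hsup
  _ = (vmod p (fun n => u n / l) + vmod p (fun n => v n / l)) * 2⁻¹ := by
        unfold vmod; ring
  _ ≤ ((1:ℝ≥0∞) + 1) * 2⁻¹ := mul_le_mul_left (add_le_add hu hv) _
  _ = 1 := by
        rw [one_add_one_eq_two]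
        exact ENNReal.mul_inv_cancel two_ne_zero ENNReal.ofNat_ne_top

end QuasiTriangle

lemma vNormE_add_le {p : ℕ → ℝ≥0∞} {m : ℝ} (hm0 : 0 < m)
    (hmp : ∀ n, ENNReal.ofReal m ≤ p n) {u v : ℕ → ℝ} {l : ℝ} (hl : 0 < l)
    (hu : vNormE p u < ENNReal.ofReal l) (hv : vNormE p v < ENNReal.ofReal l) :
    vNormE p (fun n => u n + v n) ≤ ENNReal.ofReal ((2:ℝ) ^ (1/min m 1) * l) := by
  have hc2 : 0 < (2:ℝ) ^ (1/min m 1) := Real.rpow_pos_of_pos two_pos _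
  exact vNormE_le_of_mod (by positivity)
    (qtri hm0 hmp u v hl (mod_le_of_vNormE_lt hl hu) (mod_le_of_vNormE_lt hl hv))

section Riesz

variable {q : ℕ → ℝ≥0∞} {m : ℝ}

lemma vdist_pos (hm0 : 0 < m) (hm : ∀ n, ENNReal.ofReal m ≤ q n)
    (Y : Submodule ℝ (ℕ → ℝ)) [FiniteDimensional ℝ Y] {x : ℕ → ℝ} (hx : x ∉ Y) :
    0 < ⨅ y : Y, vNormE q (fun n => x n - (y : ℕ → ℝ) n) := by
  by_contra h
  push_neg at h
  have h0 : (⨅ y : Y, vNormE q (fun n => x n - (y : ℕ → ℝ) n)) = 0 := le_antisymm h zero_le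
  have hseq : ∀ k : ℕ, ∃ y : Y, vNormE q (fun n => x n - (y : ℕ → ℝ) n) <
      ENNReal.ofReal (1 / (k + 1)) := by
    intro k
    have hpos : (0:ℝ≥0∞) < ENNReal.ofReal (1 / (k + 1)) := by
      apply ENNReal.ofReal_pos.2
      positivity
    rw [← h0] at hpos
    exact iInf_lt_iff.mp hpos
  choose g hg using hseq
  have hcoord : ∀ k : ℕ, ∀ n0, |x n0 - (g k : ℕ → ℝ) n0| < 1 / (k + 1) := by
    intro k n0
    have h1 := coord_le_vNormE hm0 hm (fun n => x n - (g k : ℕ → ℝ) n) n0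
    have h2 := lt_of_le_of_lt h1 (hg k)
    rwa [ENNReal.ofReal_lt_ofReal_iff (by positivity)] at h2
  have htend : Filter.Tendsto (fun k => (g k : ℕ → ℝ)) Filter.atTop (nhds x) := by
    rw [tendsto_pi_nhds]
    intro n0
    rw [Metric.tendsto_atTop]
    intro ε hε
    obtain ⟨K, hK⟩ := exists_nat_gt (1 / ε)
    refine ⟨K, fun k hk => ?_⟩
    have h1 : |(g k : ℕ → ℝ) n0 - x n0| < 1 / (k + 1) := by
      rw [abs_sub_comm]; exact hcoord k n0
    have h2 : 1 / ((k:ℝ) + 1) < ε := by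
      rw [div_lt_iff₀ (by positivity)]
      rw [div_lt_iff₀ hε] at hK
      have : (K:ℝ) ≤ k := Nat.cast_le.2 hk
      nlinarith
    calc dist ((g k : ℕ → ℝ) n0) (x n0) = |(g k : ℕ → ℝ) n0 - x n0| := Real.dist_eq _ _
    _ < ε := lt_trans h1 h2
  have hclosed : IsClosed (Y : Set (ℕ → ℝ)) := Y.closed_of_finiteDimensional
  exact hx (hclosed.mem_of_tendsto htend (Filter.Eventually.of_forall fun k => (g k).2))

lemma riesz_step (hm0 : 0 < m) (hm : ∀ n, ENNReal.ofReal m ≤ q n)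
    (E Y : Submodule ℝ (ℕ → ℝ)) [FiniteDimensional ℝ Y] (hYE : Y ≤ E)
    (hfin : ∀ a ∈ E, vNormE q a ≠ ⊤) {x : ℕ → ℝ} (hxE : x ∈ E) (hx : x ∉ Y) :
    ∃ z, z ∈ E ∧ vNormE q z = 1 ∧ ∀ y ∈ Y, (2:ℝ≥0∞)⁻¹ ≤ vNormE q (z - y) := by
  set d := ⨅ y : Y, vNormE q (fun n => x n - (y : ℕ → ℝ) n) with hd
  have hd0 : 0 < d := vdist_pos hm0 hm Y hx
  have hdt : d ≠ ⊤ := by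
    have h1 : d ≤ vNormE q (fun n => x n - ((0 : Y) : ℕ → ℝ) n) := iInf_le _ 0
    have h2 : (fun n => x n - ((0 : Y) : ℕ → ℝ) n) = x := by funext n; simp
    rw [h2] at h1
    exact ne_top_of_le_ne_top (hfin x hxE) h1
  have hlt : d < 2 * d := by
    rw [two_mul]
    exact ENNReal.lt_add_right hdt hd0.ne'
  obtain ⟨y0, hy0⟩ := iInf_lt_iff.mp hlt
  set w : ℕ → ℝ := fun n => x n - (y0 : ℕ → ℝ) n with hw
  have hwE : w ∈ E := by
    have : w = x - (y0 : ℕ → ℝ) := by funext n; simp [hw]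
    rw [this]
    exact sub_mem hxE (hYE y0.2)
  have hwne : w ≠ 0 := by
    intro hcon
    apply hx
    have : x = (y0 : ℕ → ℝ) := by
      funext n
      have := congrFun hcon n
      simp only [hw, Pi.zero_apply] at this
      linarith
    rw [this]
    exact y0.2
  have hwt : vNormE q w ≠ ⊤ := hfin w hwE
  obtain ⟨c, hc0, hcunit, hcprod⟩ := exists_unit_scale hm0 hm hwne hwt
  have hOc0 : ENNReal.ofReal c ≠ 0 := (ENNReal.ofReal_pos.2 hc0).ne'
  have hwinv : ENNReal.ofReal c⁻¹ = vNormE q w := by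
    rw [ENNReal.ofReal_inv_of_pos hc0]
    calc (ENNReal.ofReal c)⁻¹ = (ENNReal.ofReal c)⁻¹ * (ENNReal.ofReal c * vNormE q w) := by
          rw [hcprod, mul_one]
    _ = vNormE q w := by
          rw [← mul_assoc, ENNReal.inv_mul_cancel hOc0 ENNReal.ofReal_ne_top, one_mul]
  refine ⟨fun n => c * w n, ?_, hcunit, ?_⟩
  · have : (fun n => c * w n) = c • w := by funext n; simp [Pi.smul_apply, smul_eq_mul]
    rw [this]
    exact Submodule.smul_mem E c hwE
  · intro y hy
    set z : ℕ → ℝ := fun n => c * w n with hz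
    have hkey : d ≤ ENNReal.ofReal c⁻¹ * vNormE q (z - y) := by
      have hmem : y0 + c⁻¹ • y ∈ Y := add_mem y0.2 (Submodule.smul_mem Y _ hy)
      have h1 : d ≤ vNormE q (fun n => x n - ((⟨y0 + c⁻¹ • y, hmem⟩ : Y) : ℕ → ℝ) n) :=
        iInf_le _ _
      have h2 : (fun n => x n - ((⟨y0 + c⁻¹ • y, hmem⟩ : Y) : ℕ → ℝ) n) =
          (fun n => c⁻¹ * ((z - y) n)) := by
        funext n
        have hcoe : ((⟨y0 + c⁻¹ • y, hmem⟩ : Y) : ℕ → ℝ) n = (y0 : ℕ → ℝ) n + c⁻¹ * y n := rfl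
        rw [hcoe]
        simp only [hz, Pi.sub_apply, hw]
        field_simp
        ring
      rw [h2] at h1
      calc d ≤ vNormE q (fun n => c⁻¹ * ((z - y) n)) := h1
      _ ≤ ENNReal.ofReal |c⁻¹| * vNormE q (z - y) := vNormE_smul_le _ (by positivity)
      _ = ENNReal.ofReal c⁻¹ * vNormE q (z - y) := by rw [abs_of_pos (by positivity)]
    have hle2d : ENNReal.ofReal c⁻¹ ≤ 2 * d := by
      rw [hwinv]
      exact le_of_lt hy0
    have hkey2 : d ≤ 2 * d * vNormE q (z - y) :=
      le_trans hkey (mul_le_mul_left hle2d _)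
    have h2d0 : (2 * d) ≠ 0 := mul_ne_zero two_ne_zero hd0.ne'
    have h2dt : (2 * d) ≠ ⊤ := ENNReal.mul_ne_top ENNReal.ofNat_ne_top hdt
    calc (2:ℝ≥0∞)⁻¹ = (2 * d)⁻¹ * d := by
          rw [ENNReal.mul_inv (Or.inl two_ne_zero) (Or.inl ENNReal.ofNat_ne_top), mul_assoc,
            ENNReal.inv_mul_cancel hd0.ne' hdt, mul_one]
    _ ≤ (2 * d)⁻¹ * (2 * d * vNormE q (z - y)) := mul_le_mul_right hkey2 _
    _ = vNormE q (z - y) := by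
          rw [← mul_assoc, ENNReal.inv_mul_cancel h2d0 h2dt, one_mul]

end Riesz

lemma vNormE_zero {r : ℕ → ℝ≥0∞} {m : ℝ} (hm0 : 0 < m)
    (hm : ∀ n, ENNReal.ofReal m ≤ r n) : vNormE r (0 : ℕ → ℝ) = 0 := by
  apply le_antisymm _ zero_le
  apply le_of_forall_gt_imp_ge_of_dense
  intro b hb
  rcases eq_or_ne b ⊤ with rfl | hbt
  · exact le_top
  have hb0 : 0 < b.toReal := ENNReal.toReal_pos hb.ne' hbt
  have hmod : vmod r (fun n => (0:ℕ → ℝ) n / b.toReal) ≤ 1 := by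
    have h1 : ∀ n, (if r n ≠ ⊤ then
        ENNReal.ofReal (|(0:ℝ) / b.toReal| ^ (r n).toReal) else 0) = 0 := by
      intro n
      split
      · rename_i hn
        have hs : 0 < (r n).toReal := by
          have := ENNReal.toReal_mono hn (hm n)
          rw [ENNReal.toReal_ofReal hm0.le] at this
          linarith
        rw [zero_div, abs_zero, Real.zero_rpow hs.ne', ENNReal.ofReal_zero]
      · rfl
    unfold vmod
    simp only [Pi.zero_apply]
    rw [tsum_congr h1, tsum_zero]
    simp
  calc vNormE r (0 : ℕ → ℝ) ≤ ENNReal.ofReal b.toReal := vNormE_le_of_mod hb0 hmod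
  _ = b := ENNReal.ofReal_toReal hbt

lemma vNormE_sub_comm {r : ℕ → ℝ≥0∞} (a b : ℕ → ℝ) :
    vNormE r (a - b) = vNormE r (b - a) :=
  vNormE_congr fun n => by simp [abs_sub_comm]

lemma separated_family {q : ℕ → ℝ≥0∞} {m : ℝ} (hm0 : 0 < m)
    (hm : ∀ n, ENNReal.ofReal m ≤ q n) (E : Submodule ℝ (ℕ → ℝ))
    (hfin : ∀ a ∈ E, vNormE q a ≠ ⊤) :
    ∀ k : ℕ, k ≤ Module.finrank ℝ E → ∃ f : Fin k → (ℕ → ℝ),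
      (∀ i, f i ∈ E) ∧ (∀ i, vNormE q (f i) = 1) ∧
      ∀ i j, i ≠ j → (2:ℝ≥0∞)⁻¹ ≤ vNormE q (f i - f j) := by
  intro k
  induction k with
  | zero => exact fun _ => ⟨Fin.elim0, fun i => i.elim0, fun i => i.elim0, fun i => i.elim0⟩
  | succ k ih =>
    intro hk
    obtain ⟨f, hf1, hf2, hf3⟩ := ih (le_trans (Nat.le_succ k) hk)
    set Y : Submodule ℝ (ℕ → ℝ) := Submodule.span ℝ (Set.range f) with hY
    haveI : FiniteDimensional ℝ Y := FiniteDimensional.span_of_finite ℝ (Set.finite_range f)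
    have hYE : Y ≤ E := Submodule.span_le.2 (by rintro _ ⟨i, rfl⟩; exact hf1 i)
    have hexists : ∃ x, x ∈ E ∧ x ∉ Y := by
      by_contra hcon
      push_neg at hcon
      have hEY : E ≤ Y := fun x hx => hcon x hx
      haveI : FiniteDimensional ℝ E := Submodule.finiteDimensional_of_le hEY
      have h1 : Module.finrank ℝ E ≤ Module.finrank ℝ Y := Submodule.finrank_mono hEY
      have h2 : Module.finrank ℝ Y ≤ k := by
        classical
        calc Module.finrank ℝ Y ≤ (Set.range f).toFinset.card := finrank_span_le_card _
        _ ≤ k := by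
            rw [Set.toFinset_range]
            calc (Finset.image f Finset.univ).card ≤ Finset.univ.card :=
              Finset.card_image_le
            _ = k := Finset.card_fin k
      omega
    obtain ⟨x, hxE, hxY⟩ := hexists
    obtain ⟨z, hzE, hz1, hz2⟩ := riesz_step hm0 hm E Y hYE hfin hxE hxY
    refine ⟨Fin.snoc f z, ?_, ?_, ?_⟩
    · intro i
      rcases Fin.eq_castSucc_or_eq_last i with ⟨i', rfl⟩ | rfl
      · rw [Fin.snoc_castSucc]; exact hf1 i'
      · rw [Fin.snoc_last]; exact hzE
    · intro i
      rcases Fin.eq_castSucc_or_eq_last i with ⟨i', rfl⟩ | rfl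
      · rw [Fin.snoc_castSucc]; exact hf2 i'
      · rw [Fin.snoc_last]; exact hz1
    · intro i j hij
      rcases Fin.eq_castSucc_or_eq_last i with ⟨i', rfl⟩ | rfl <;>
        rcases Fin.eq_castSucc_or_eq_last j with ⟨j', rfl⟩ | rfl
      · rw [Fin.snoc_castSucc, Fin.snoc_castSucc]
        exact hf3 i' j' (fun h => hij (by rw [h]))
      · rw [Fin.snoc_castSucc, Fin.snoc_last, vNormE_sub_comm]
        exact hz2 _ (Submodule.subset_span ⟨i', rfl⟩)
      · rw [Fin.snoc_castSucc, Fin.snoc_last]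
        exact hz2 _ (Submodule.subset_span ⟨j', rfl⟩)
      · exact absurd rfl hij

/-- `n`-th Bernstein number of the natural embedding `id : ℓ_{q_n} → ℓ_{p_n}`. -/
noncomputable def bern (q p : ℕ → ℝ≥0∞) (n : ℕ) : ℝ≥0∞ :=
  ⨆ E : {E : Submodule ℝ (ℕ → ℝ) //
      Module.finrank ℝ E = n ∧ ∀ a ∈ E, vNormE q a ≠ ⊤},
    ⨅ a : {a : ℕ → ℝ // a ∈ E.1 ∧ vNormE q a = 1}, vNormE p a.1

theorem stmt_19 (p q : ℕ → ℝ≥0∞) (m : ℝ) (hm0 : 0 < m)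
    (hmp : ∀ n, ENNReal.ofReal m ≤ p n) (hmq : ∀ n, ENNReal.ofReal m ≤ q n)
    -- the embedding `id : ℓ_{q_n} → ℓ_{p_n}` is compact, i.e. the image of the
    -- closed unit ball of `ℓ_{q_n}` is totally bounded in `ℓ_{p_n}`:
    (hcompact : ∀ ε : ℝ, 0 < ε → ∃ F : Finset (ℕ → ℝ), ∀ a : ℕ → ℝ,
      vNormE q a ≤ 1 → ∃ b ∈ F, vNormE p (a - b) < ENNReal.ofReal ε) :
    Filter.Tendsto (bern q p) Filter.atTop (nhds 0) := by
  rw [ENNReal.tendsto_atTop_zero]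
  intro ε hε
  -- a real-valued threshold
  set e : ℝ := if ε = ⊤ then 1 else ε.toReal with he
  have he0 : 0 < e := by
    rw [he]
    split
    · norm_num
    · rename_i h; exact ENNReal.toReal_pos hε.ne' h
  have heε : ENNReal.ofReal e ≤ ε := by
    rw [he]
    split
    · rename_i h; rw [h]; exact le_top
    · rename_i h; rw [ENNReal.ofReal_toReal h]
  set t : ℝ := min m 1 with ht
  have ht0 : 0 < t := lt_min hm0 one_pos
  set c2 : ℝ := (2:ℝ) ^ (1/t) with hc2
  have hc2pos : 0 < c2 := Real.rpow_pos_of_pos two_pos _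
  set ε₁ : ℝ := e / (4 * c2) with hε₁def
  have hε₁ : 0 < ε₁ := by positivity
  obtain ⟨F, hF⟩ := hcompact ε₁ hε₁
  refine ⟨F.card + 1, fun n hn => ?_⟩
  refine le_trans ?_ heε
  apply iSup_le
  rintro ⟨E, hErank, hEfin⟩
  by_contra hcon
  push_neg at hcon
  have hunit : ∀ a : {a : ℕ → ℝ // a ∈ E ∧ vNormE q a = 1},
      ENNReal.ofReal e < vNormE p a.1 := fun a => lt_of_lt_of_le hcon (iInf_le _ a)
  -- propagation of the lower bound to all of `E`
  have hprop : ∀ x ∈ E, ENNReal.ofReal e * vNormE q x ≤ vNormE p x := by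
    intro x hx
    by_cases hx0 : x = 0
    · rw [hx0, vNormE_zero hm0 hmq, mul_zero]
      exact zero_le
    obtain ⟨c, hc0, hcunit, hcprod⟩ := exists_unit_scale hm0 hmq hx0 (hEfin x hx)
    have hcmem : (fun n => c * x n) ∈ E := by
      have : (fun n => c * x n) = c • x := by funext n; simp [Pi.smul_apply, smul_eq_mul]
      rw [this]; exact Submodule.smul_mem E c hx
    have h1 : ENNReal.ofReal e < vNormE p (fun n => c * x n) :=
      hunit ⟨fun n => c * x n, hcmem, hcunit⟩
    have h2 : vNormE p (fun n => c * x n) ≤ ENNReal.ofReal c * vNormE p x := by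
      calc vNormE p (fun n => c * x n) ≤ ENNReal.ofReal |c| * vNormE p x :=
            vNormE_smul_le x hc0.ne'
      _ = ENNReal.ofReal c * vNormE p x := by rw [abs_of_pos hc0]
    have hOc0 : ENNReal.ofReal c ≠ 0 := (ENNReal.ofReal_pos.2 hc0).ne'
    have hxq : vNormE q x = (ENNReal.ofReal c)⁻¹ := by
      calc vNormE q x = (ENNReal.ofReal c)⁻¹ * (ENNReal.ofReal c * vNormE q x) := by
            rw [← mul_assoc, ENNReal.inv_mul_cancel hOc0 ENNReal.ofReal_ne_top, one_mul]
      _ = (ENNReal.ofReal c)⁻¹ := by rw [hcprod, mul_one]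
    calc ENNReal.ofReal e * vNormE q x = ENNReal.ofReal e * (ENNReal.ofReal c)⁻¹ := by
          rw [hxq]
    _ ≤ ENNReal.ofReal c * vNormE p x * (ENNReal.ofReal c)⁻¹ :=
          mul_le_mul_left (le_trans h1.le h2) _
    _ = vNormE p x * (ENNReal.ofReal c * (ENNReal.ofReal c)⁻¹) := by ring
    _ = vNormE p x := by
          rw [ENNReal.mul_inv_cancel hOc0 ENNReal.ofReal_ne_top, mul_one]
  -- a (1/2)-separated family of q-unit vectors in E of size n
  obtain ⟨f, hf1, hf2, hf3⟩ := separated_family hm0 hmq E hEfin n (le_of_eq hErank.symm)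
  have hchoice : ∀ i : Fin n, ∃ b ∈ F, vNormE p (f i - b) < ENNReal.ofReal ε₁ :=
    fun i => hF (f i) (le_of_eq (hf2 i))
  choose b hbF hb using hchoice
  have hcard : Fintype.card {x // x ∈ F} < Fintype.card (Fin n) := by
    rw [Fintype.card_coe, Fintype.card_fin]
    omega
  obtain ⟨i, j, hij, hbij⟩ :=
    Fintype.exists_ne_map_eq_of_card_lt (fun i : Fin n => (⟨b i, hbF i⟩ : {x // x ∈ F})) hcard
  have hbeq : b i = b j := congrArg Subtype.val hbij
  -- quasi-triangle inequality
  have h1 : vNormE p (f i - b i) < ENNReal.ofReal ε₁ := hb i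
  have h2 : vNormE p (b i - f j) < ENNReal.ofReal ε₁ := by
    rw [vNormE_sub_comm, hbeq]
    exact hb j
  have h3 : vNormE p (fun k => (f i - b i) k + (b i - f j) k) ≤
      ENNReal.ofReal (c2 * ε₁) := vNormE_add_le hm0 hmp hε₁ h1 h2
  have h4 : (fun k => (f i - b i) k + (b i - f j) k) = f i - f j := by
    funext k
    simp only [Pi.sub_apply]
    ring
  rw [h4] at h3
  have h5 : ENNReal.ofReal e * 2⁻¹ ≤ vNormE p (f i - f j) := by
    calc ENNReal.ofReal e * 2⁻¹ ≤ ENNReal.ofReal e * vNormE q (f i - f j) :=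
          mul_le_mul_right (hf3 i j hij) _
    _ ≤ vNormE p (f i - f j) := hprop _ (sub_mem (hf1 i) (hf1 j))
  have h6 : ENNReal.ofReal (e/2) ≤ ENNReal.ofReal (c2 * ε₁) := by
    calc ENNReal.ofReal (e/2) = ENNReal.ofReal e * 2⁻¹ := by
          rw [ENNReal.ofReal_div_of_pos two_pos, div_eq_mul_inv]
          norm_num
    _ ≤ ENNReal.ofReal (c2 * ε₁) := le_trans h5 h3
  rw [ENNReal.ofReal_le_ofReal_iff (by positivity)] at h6
  have h7 : c2 * ε₁ = e / 4 := by
    rw [hε₁def]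
    field_simp
  rw [h7] at h6
  linarith
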